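/- arXiv:1004.3321 — 5 statements merged into one kernel-verified Lean document; each statement's English description precedes it below -/
import Mathlib

section
/- Let A be a finitely generated abelian group and let α and β be endomorphisms of A such that β - α = m·id_A for some integer m. Then for every prime p not dividing m, the Sylow p-subgroup of coker(α∘β) is isomorphic to the Sylow p-subgroup of coker(α) ⊕ coker(β). -/
/-!
Since `β = α + m`, the endomorphisms `α` and `β` commute. The diagonal map
`A ⧸ im (α ∘ β) → A ⧸ im α × A ⧸ im β` has kernel `(im α ∩ im β) ⧸ im (α ∘ β)` and cokernel
`A ⧸ (im α + im β)`, and both are killed by `m`: for `a = α b = β c` one gets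
`m • a = (α ∘ β) (b - c)`, and `m • a = β a - α a`. A homomorphism whose kernel and cokernel are
killed by an integer prime to `p` restricts to an isomorphism of `p`-primary components, by
Bézout's identity applied to `m` and a power of `p`.
-/

namespace AddCommGroup

variable {G H : Type*} [AddCommGroup G] [AddCommGroup H] {p : ℕ}

theorem map_mem_primaryComponent (f : G →+ H) {x : G} (hx : x ∈ primaryComponent G p) :
    f x ∈ primaryComponent H p := by
  obtain ⟨k, hk⟩ := hx
  exact ⟨k, by rw [← map_nsmul, hk, map_zero]⟩

variable (p) in
def primaryComponentMap (f : G →+ H) : primaryComponent G p →+ primaryComponent H p :=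
  (f.comp (primaryComponent G p).subtype).codRestrict _ fun x ↦ map_mem_primaryComponent f x.2

theorem natCast_pow_zsmul_eq_zero {x : G} {k : ℕ} (hk : p ^ k • x = 0) :
    ((p : ℤ) ^ k) • x = 0 := by
  exact_mod_cast hk

theorem bijective_primaryComponentMap (f : G →+ H) {n : ℤ} (hpn : IsCoprime (p : ℤ) n)
    (hker : ∀ x, f x = 0 → n • x = 0) (hrange : ∀ y, ∃ x, f x = n • y) :
    Function.Bijective (primaryComponentMap p f) := by
  constructor
  · rw [injective_iff_map_eq_zero]
    rintro ⟨x, k, hk⟩ hfx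
    have hnx : n • x = 0 := hker x (congrArg Subtype.val hfx)
    obtain ⟨u, v, huv⟩ := hpn.pow_left (m := k)
    ext
    calc x = (u * (p : ℤ) ^ k + v * n) • x := by rw [huv, one_smul]
      _ = u • ((p : ℤ) ^ k • x) + v • (n • x) := by rw [add_smul, mul_smul, mul_smul]
      _ = 0 := by rw [natCast_pow_zsmul_eq_zero hk, hnx, smul_zero, smul_zero, add_zero]
  · rintro ⟨y, k, hk⟩
    obtain ⟨u, v, huv⟩ := hpn.pow_left (m := k)
    obtain ⟨x, hx⟩ := hrange y
    have hy : (v * n) • y = y := by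
      calc (v * n) • y = (u * (p : ℤ) ^ k + v * n) • y := by
            rw [add_smul, mul_smul u, natCast_pow_zsmul_eq_zero hk, smul_zero, zero_add]
        _ = y := by rw [huv, one_smul]
    have hnx : n • ((p : ℤ) ^ k • x) = 0 :=
      hker _ (by rw [map_zsmul, hx, smul_comm, natCast_pow_zsmul_eq_zero hk, smul_zero])
    refine ⟨⟨(v * v * n) • x, k, ?_⟩, ?_⟩
    · have : ((p : ℤ) ^ k) • (v * v * n) • x = (v * v) • n • ((p : ℤ) ^ k • x) := by
        simp only [smul_smul]; ring_nf
      exact_mod_cast this.trans (by rw [hnx, smul_zero])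
    · ext
      calc f ((v * v * n) • x) = (v * n) • (v * n) • y := by
            rw [map_zsmul, hx, smul_smul, smul_smul]; ring_nf
        _ = y := by rw [hy, hy]

end AddCommGroup

namespace QuotientAddGroup

variable {A : Type*} [AddCommGroup A] {N₀ N₁ N₂ : AddSubgroup A}

def toProd (h₁ : N₀ ≤ N₁) (h₂ : N₀ ≤ N₂) : A ⧸ N₀ →+ (A ⧸ N₁) × (A ⧸ N₂) :=
  lift N₀ ((mk' N₁).prod (mk' N₂)) fun x hx ↦ by
    simp [Prod.ext_iff, (eq_zero_iff x).mpr (h₁ hx), (eq_zero_iff x).mpr (h₂ hx)]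

@[simp]
theorem toProd_mk (h₁ : N₀ ≤ N₁) (h₂ : N₀ ≤ N₂) (x : A) :
    toProd h₁ h₂ (x : A ⧸ N₀) = ((x : A ⧸ N₁), (x : A ⧸ N₂)) :=
  rfl

theorem smul_eq_zero_of_toProd_eq_zero (h₁ : N₀ ≤ N₁) (h₂ : N₀ ≤ N₂) {m : ℤ}
    (hm : ∀ a ∈ N₁, a ∈ N₂ → m • a ∈ N₀) {x : A ⧸ N₀} (hx : toProd h₁ h₂ x = 0) :
    m • x = 0 := by
  induction x using QuotientAddGroup.induction_on with | H a => ?_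
  simp only [toProd_mk, Prod.mk_eq_zero, eq_zero_iff] at hx
  rw [← mk_zsmul, eq_zero_iff]
  exact hm a hx.1 hx.2

theorem exists_toProd_eq_smul (h₁ : N₀ ≤ N₁) (h₂ : N₀ ≤ N₂) {m : ℤ}
    (hm : ∀ a : A, m • a ∈ N₁ ⊔ N₂) (y : (A ⧸ N₁) × (A ⧸ N₂)) :
    ∃ x, toProd h₁ h₂ x = m • y := by
  obtain ⟨y₁, y₂⟩ := y
  obtain ⟨y₁, rfl⟩ := mk_surjective y₁
  obtain ⟨y₂, rfl⟩ := mk_surjective y₂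
  obtain ⟨a, ha, b, hb, hab⟩ := AddSubgroup.mem_sup.mp (hm (y₁ - y₂))
  refine ⟨((m • y₁ - a : A) : A ⧸ N₀), ?_⟩
  rw [toProd_mk, Prod.smul_mk, ← mk_zsmul, ← mk_zsmul, Prod.mk.injEq, eq_iff_sub_mem,
    eq_iff_sub_mem]
  constructor
  · simpa using N₁.neg_mem ha
  · rwa [show m • y₁ - a - m • y₂ = b by rw [eq_sub_of_add_eq' hab, smul_sub]; abel]

end QuotientAddGroup

namespace AddMonoidHom

variable {A : Type*} [AddCommGroup A] {α β : A →+ A} {m : ℤ}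

theorem sub_apply_eq_smul_of_sub_eq (h : β - α = m • AddMonoidHom.id A) (a : A) :
    β a - α a = m • a := by
  simpa using DFunLike.congr_fun h a

theorem comp_comm_of_sub_eq_smul_id (h : β - α = m • AddMonoidHom.id A) :
    α.comp β = β.comp α := by
  ext a
  have hβ (x : A) : β x = α x + m • x := eq_add_of_sub_eq' (sub_apply_eq_smul_of_sub_eq h x)
  rw [comp_apply, comp_apply, hβ, hβ, map_add, map_zsmul]

theorem smul_mem_range_comp_of_mem_range_of_mem_range (h : β - α = m • AddMonoidHom.id A) {a : A}
    (ha : a ∈ α.range) (hb : a ∈ β.range) : m • a ∈ (α.comp β).range := by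
  obtain ⟨b, rfl⟩ := ha
  obtain ⟨c, hc⟩ := hb
  refine ⟨b - c, ?_⟩
  rw [comp_apply, map_sub, map_sub, hc, ← comp_apply α β, comp_comm_of_sub_eq_smul_id h,
    comp_apply, sub_apply_eq_smul_of_sub_eq h]

theorem smul_mem_range_sup_range (h : β - α = m • AddMonoidHom.id A) (a : A) :
    m • a ∈ α.range ⊔ β.range := by
  rw [← sub_apply_eq_smul_of_sub_eq h]
  exact sub_mem (AddSubgroup.mem_sup_right ⟨a, rfl⟩) (AddSubgroup.mem_sup_left ⟨a, rfl⟩)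

end AddMonoidHom

theorem stmt0_general (A : Type*) [AddCommGroup A]
    (α β : A →+ A) (m : ℤ) (hβα : β - α = m • AddMonoidHom.id A)
    (p : ℕ) [Fact p.Prime] (hpm : ¬ (p : ℤ) ∣ m) :
    Nonempty
      ((AddCommGroup.primaryComponent (A ⧸ (α.comp β).range) p) ≃+
        (AddCommGroup.primaryComponent ((A ⧸ α.range) × (A ⧸ β.range)) p)) := by
  have hcop : IsCoprime (p : ℤ) m :=
    (Nat.prime_iff_prime_int.mp Fact.out).coprime_iff_not_dvd.mpr hpm
  have h₁ : (α.comp β).range ≤ α.range := by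
    rintro _ ⟨a, rfl⟩
    exact ⟨β a, rfl⟩
  have h₂ : (α.comp β).range ≤ β.range := by
    rw [AddMonoidHom.comp_comm_of_sub_eq_smul_id hβα]
    rintro _ ⟨a, rfl⟩
    exact ⟨α a, rfl⟩
  have hker (x) : QuotientAddGroup.toProd h₁ h₂ x = 0 → m • x = 0 :=
    QuotientAddGroup.smul_eq_zero_of_toProd_eq_zero h₁ h₂
      fun _ ↦ AddMonoidHom.smul_mem_range_comp_of_mem_range_of_mem_range hβα
  have hrange := QuotientAddGroup.exists_toProd_eq_smul h₁ h₂
    (AddMonoidHom.smul_mem_range_sup_range hβα)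
  exact ⟨.ofBijective _ (AddCommGroup.bijective_primaryComponentMap _ hcop hker hrange)⟩

/-- Lemma 5.2 (Bai / Jacobson–Niedermaier–Reiner): if `α, β` are endomorphisms of a
finitely generated abelian group `A` with `β - α = m • id`, then for every prime `p`
not dividing `m`, the `p`-primary (Sylow `p`-) component of `coker (α ∘ β)` is
isomorphic to that of `coker α ⊕ coker β`. -/
theorem stmt0 (A : Type*) [AddCommGroup A] [AddGroup.FG A]
    (α β : A →+ A) (m : ℤ) (hβα : β - α = m • AddMonoidHom.id A)
    [Finite (A ⧸ (α.comp β).range)] [Finite (A ⧸ α.range)] [Finite (A ⧸ β.range)]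
    (p : ℕ) [Fact p.Prime] (hpm : ¬ (p : ℤ) ∣ m) :
    Nonempty
      ((AddCommGroup.primaryComponent (A ⧸ (α.comp β).range) p) ≃+
        (AddCommGroup.primaryComponent ((A ⧸ α.range) × (A ⧸ β.range)) p)) :=
  stmt0_general A α β m hβα p hpm
end

section
/- Let L be an n×n integer matrix with nonzero determinant, and consider the 2n×2n block matrix M = [[L + I, -I], [-I, L + I]] where I is the n×n identity. Then M is equivalent over ℤ (via elementary row and column operations invertible over ℤ) to the block diagonal matrix [[I, 0], [0, L·(L+2I)]]; in particular det(M) = det(L) · det(L + 2I), and the cokernel of M is isomorphic to the cokernel of L·(L+2I). -/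
open Matrix

/-!
With `A = L + 1`, block row and column operations give
`[[A, -1], [-1, A]] = [[A, 1], [-1, 0]] · diag(1, A² - 1) · [[1, -A], [0, 1]]`,
and `A² - 1 = L (L + 2)`. Both outer factors are products of block unitriangular matrices
(`[[0, 1], [-1, 0]]` is a product of three), so they have determinant `1` and act as
automorphisms of `ℤ^(n ⊕ n)`, which preserve cokernels; and the cokernel of `diag(1, K)`
is that of `K`.
-/

namespace Matrix

variable {l m n R : Type*}

theorem fromBlocks_neg_one_neg_one_eq_mul_mul {α : Type*} [Ring α] [Fintype n] [DecidableEq n]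
    (A : Matrix n n α) :
    fromBlocks A (-1) (-1) A =
      fromBlocks A 1 (-1) 0 * fromBlocks 1 0 0 (A * A - 1) * fromBlocks 1 (-A) 0 1 := by
  simp only [fromBlocks_multiply, fromBlocks_inj]
  refine ⟨?_, ?_, ?_, ?_⟩ <;> noncomm_ring

variable [CommRing R]

theorem det_fromBlocks_one₁₂_neg_one₂₁_zero₂₂ [Fintype n] [DecidableEq n] (A : Matrix n n R) :
    (fromBlocks A 1 (-1) 0 : Matrix (n ⊕ n) (n ⊕ n) R).det = 1 := by
  have h : fromBlocks A 1 (-1) 0 =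
      fromBlocks 1 (-A) 0 1 * (fromBlocks 1 1 0 1 * fromBlocks 1 0 (-1) 1 * fromBlocks 1 1 0 1 :
        Matrix (n ⊕ n) (n ⊕ n) R) := by
    simp only [fromBlocks_multiply, fromBlocks_inj]
    refine ⟨?_, ?_, ?_, ?_⟩ <;> noncomm_ring
  simp [h]

noncomputable def cokernelEquivOfEqMulMul [Fintype m] [DecidableEq m] [Fintype n] [DecidableEq n]
    {M D : Matrix m n R} {U : Matrix m m R} {V : Matrix n n R}
    (hU : IsUnit U.det) (hV : IsUnit V.det) (h : M = U * D * V) :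
    ((m → R) ⧸ LinearMap.range M.toLin') ≃ₗ[R] ((m → R) ⧸ LinearMap.range D.toLin') :=
  let eU := U.toLinearEquiv' (U.invertibleOfIsUnitDet hU)
  let eV := V.toLinearEquiv' (V.invertibleOfIsUnitDet hV)
  Submodule.Quotient.equiv _ _ eU.symm <| by
    have hM : M.toLin' =
        (eU : (m → R) →ₗ[R] m → R) ∘ₗ D.toLin' ∘ₗ (eV : (n → R) →ₗ[R] n → R) := by
      simp only [eU, eV, toLinearEquiv'_apply, h, toLin'_mul, LinearMap.comp_assoc]
    rw [Submodule.map_symm_eq_iff, hM, LinearMap.range_comp, LinearEquiv.range_comp]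

section BlockDiagonal

variable [Fintype l] [DecidableEq l] [Fintype n] [DecidableEq n]

theorem mem_range_toLin'_fromBlocks_one_zero_zero {K : Matrix m n R} {y : l ⊕ m → R} :
    y ∈ LinearMap.range (fromBlocks (1 : Matrix l l R) 0 0 K).toLin' ↔
      y ∘ Sum.inr ∈ LinearMap.range K.toLin' := by
  simp only [LinearMap.mem_range, toLin'_apply]
  constructor
  · rintro ⟨x, rfl⟩
    exact ⟨x ∘ Sum.inr, by ext i; simp [fromBlocks_mulVec]⟩
  · rintro ⟨z, hz⟩
    refine ⟨Sum.elim (y ∘ Sum.inl) z, ?_⟩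
    ext (i | i)
    · simp [fromBlocks_mulVec]
    · simpa [fromBlocks_mulVec] using congrFun hz i

noncomputable def cokernelFromBlocksOneZeroZeroEquiv (K : Matrix m n R) :
    ((l ⊕ m → R) ⧸ LinearMap.range (fromBlocks (1 : Matrix l l R) 0 0 K).toLin') ≃ₗ[R]
      ((m → R) ⧸ LinearMap.range K.toLin') :=
  let f := (LinearMap.range K.toLin').mkQ ∘ₗ LinearMap.funLeft R R (Sum.inr : m → l ⊕ m)
  have hf : Function.Surjective f := fun z ↦ by
    obtain ⟨y, rfl⟩ := Submodule.Quotient.mk_surjective _ z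
    exact ⟨Sum.elim 0 y, rfl⟩
  have hker : LinearMap.range (fromBlocks (1 : Matrix l l R) 0 0 K).toLin' = LinearMap.ker f := by
    ext y
    rw [mem_range_toLin'_fromBlocks_one_zero_zero, LinearMap.mem_ker]
    exact (Submodule.Quotient.mk_eq_zero _).symm
  (Submodule.quotEquivOfEq _ _ hker).trans (f.quotKerEquivOfSurjective hf)

end BlockDiagonal

end Matrix

theorem stmt2_general (n : ℕ) (L : Matrix (Fin n) (Fin n) ℤ) :
    (∃ U V : Matrix (Fin n ⊕ Fin n) (Fin n ⊕ Fin n) ℤ,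
        IsUnit U.det ∧ IsUnit V.det ∧
          Matrix.fromBlocks (L + 1) (-1) (-1) (L + 1) =
            U * Matrix.fromBlocks 1 0 0 (L * (L + 2)) * V) ∧
      (Matrix.fromBlocks (L + 1) (-1) (-1) (L + 1)).det = L.det * (L + 2).det ∧
      Nonempty
        ((((Fin n ⊕ Fin n) → ℤ) ⧸
            LinearMap.range (Matrix.toLin' (Matrix.fromBlocks (L + 1) (-1) (-1) (L + 1))))
          ≃+ ((Fin n → ℤ) ⧸ LinearMap.range (Matrix.toLin' (L * (L + 2))))) := by
  have hfactor := fromBlocks_neg_one_neg_one_eq_mul_mul (L + 1)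
  rw [show (L + 1) * (L + 1) - 1 = L * (L + 2) by noncomm_ring] at hfactor
  have hdetU := det_fromBlocks_one₁₂_neg_one₂₁_zero₂₂ (L + 1)
  refine ⟨⟨_, _, by simp [hdetU], by simp, hfactor⟩, ?_, ?_⟩
  · simp [hfactor, hdetU]
  · exact ⟨((cokernelEquivOfEqMulMul (by simp [hdetU]) (by simp) hfactor).trans
      (cokernelFromBlocksOneZeroZeroEquiv _)).toAddEquiv⟩

/-- The block matrix `[[L+I, -I], [-I, L+I]]` is ℤ-equivalent to
`diag(I, L·(L+2I))`; in particular its determinant is `det L · det (L+2I)` and its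
cokernel is isomorphic to the cokernel of `L·(L+2I)`. -/
theorem stmt2 (n : ℕ) (L : Matrix (Fin n) (Fin n) ℤ) (hL : L.det ≠ 0) :
    (∃ U V : Matrix (Fin n ⊕ Fin n) (Fin n ⊕ Fin n) ℤ,
        IsUnit U.det ∧ IsUnit V.det ∧
          Matrix.fromBlocks (L + 1) (-1) (-1) (L + 1) =
            U * Matrix.fromBlocks 1 0 0 (L * (L + 2)) * V) ∧
      (Matrix.fromBlocks (L + 1) (-1) (-1) (L + 1)).det = L.det * (L + 2).det ∧
      Nonempty
        ((((Fin n ⊕ Fin n) → ℤ) ⧸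
            LinearMap.range (Matrix.toLin' (Matrix.fromBlocks (L + 1) (-1) (-1) (L + 1))))
          ≃+ ((Fin n → ℤ) ⧸ LinearMap.range (Matrix.toLin' (L * (L + 2))))) :=
  stmt2_general n L
end

section
/- For natural numbers k ≥ 0 and d ≥ 1, the order of the sandpile group of the (2k+1)-cone of the hypercube Q_d equals ∏_{i=0}^{d} (2i + 2k + 1)^{binom(d,i)}. -/
/-!
The characters `W a b = (-1)^(a ⬝ b)` of `(ZMod 2)^d` form a matrix with `W * W = 2^d • 1`,
and conjugation by `W` turns translation by the basis vector `eᵢ` into multiplication by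
`(-1)^(aᵢ)`. Since `L(Q_d) = d • 1 - ∑ᵢ (translation by eᵢ)`, this diagonalises
`L(Q_d) + c • 1` with eigenvalue `c + 2 |a|` at `a`, where `|a|` is the Hamming weight, so its
determinant is `∏ₘ (c + 2m)^(d choose m)`. A nonsingular integer matrix has a cokernel of
order `|det|` (Smith normal form).
-/

open Matrix

/-- The Laplacian matrix of the hypercube `Q_d`, with vertex set `{0,1}^d` and
edges between vectors differing in exactly one coordinate. -/
def cubeLap (d : ℕ) : Matrix (Fin d → ZMod 2) (Fin d → ZMod 2) ℤ := fun a b =>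
  if a = b then (d : ℤ)
  else if (Finset.univ.filter fun i => a i ≠ b i).card = 1 then -1 else 0

open Finset

lemma natCard_quotient_range_toLin' {ι : Type*} [Fintype ι] [DecidableEq ι]
    (A : Matrix ι ι ℤ) (hA : A.det ≠ 0) :
    Nat.card ((ι → ℤ) ⧸ LinearMap.range A.toLin') = A.det.natAbs := by
  have hinj : Function.Injective A.toLin' := by
    rw [← LinearMap.ker_eq_bot, LinearMap.ker_eq_bot']
    intro v hv
    by_contra h
    exact hA (exists_mulVec_eq_zero_iff.mp ⟨v, h, hv⟩)
  rw [← Submodule.natAbs_det_equiv _ (LinearEquiv.ofInjective _ hinj), ← LinearMap.det_toLin' A]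
  rfl

lemma sum_ite_eq_singleton {ι R : Type*} [Fintype ι] [DecidableEq ι] [AddCommMonoidWithOne R]
    (s : Finset ι) : (∑ i, if s = {i} then 1 else 0 : R) = if #s = 1 then 1 else 0 := by
  by_cases hs : #s = 1
  · obtain ⟨a, rfl⟩ := card_eq_one.mp hs
    simp
  · rw [if_neg hs]
    refine sum_eq_zero fun i _ => if_neg ?_
    rintro rfl
    exact hs (card_singleton i)

theorem Finset.prod_powerset_apply_card {M β : Type*} [CommMonoid M] (f : ℕ → M)
    (x : Finset β) :
    ∏ m ∈ x.powerset, f #m = ∏ m ∈ range (#x + 1), f m ^ (#x).choose m := by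
  simpa [toMul_sum, toMul_nsmul] using
    congrArg Additive.toMul (sum_powerset_apply_card (fun m => Additive.ofMul (f m)) (x := x))

def signChar (x : ZMod 2) : ℤ := if x = 0 then 1 else -1

lemma signChar_add : ∀ x y : ZMod 2, signChar (x + y) = signChar x * signChar y := by decide

lemma signChar_eq_one_sub : ∀ x : ZMod 2, signChar x = 1 - 2 * if x ≠ 0 then 1 else 0 := by
  decide

lemma sum_signChar_mul : ∀ x : ZMod 2, ∑ t, signChar (x * t) = if x = 0 then 2 else 0 := by
  decide

section Cube

variable {ι : Type*} [Fintype ι]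

lemma sum_signChar (a : ι → ZMod 2) :
    ∑ i, signChar (a i) = Fintype.card ι - 2 * hammingNorm a := by
  simp_rw [signChar_eq_one_sub, sum_sub_distrib, ← mul_sum, sum_boole]
  simp [hammingNorm]

variable [DecidableEq ι]

lemma prod_hammingNorm {M : Type*} [CommMonoid M] (f : ℕ → M) :
    ∏ a : ι → ZMod 2, f (hammingNorm a) =
      ∏ m ∈ range (Fintype.card ι + 1), f m ^ (Fintype.card ι).choose m := by
  have hsupport :
      ∏ a : ι → ZMod 2, f (hammingNorm a) = ∏ s ∈ (univ : Finset ι).powerset, f #s := by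
    refine prod_nbij' (fun a => ({i | a i ≠ 0} : Finset ι)) (fun s i => if i ∈ s then 1 else 0)
      (by simp) (by simp) (fun a _ => ?_) (fun s _ => ?_) (fun _ _ => rfl)
    · funext i
      simp only [mem_filter, mem_univ, true_and]
      generalize a i = x
      revert x; decide
    · ext i
      by_cases hi : i ∈ s <;> simp [hi]
  rw [hsupport, prod_powerset_apply_card, card_univ]

lemma eq_add_single_one_iff {x b : ι → ZMod 2} {i : ι} :
    x = b + Pi.single i 1 ↔ ({j | x j ≠ b j} : Finset ι) = {i} := by
  simp only [funext_iff, Finset.ext_iff, mem_filter, mem_univ, true_and, mem_singleton,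
    Pi.add_apply]
  refine forall_congr' fun j => ?_
  by_cases hj : j = i
  · subst hj
    simp only [Pi.single_eq_same, iff_true]
    generalize x j = u; generalize b j = v
    revert u v; decide
  · simp [hj]

variable (ι) in
def walsh : Matrix (ι → ZMod 2) (ι → ZMod 2) ℤ :=
  of fun a b => ∏ i, signChar (a i * b i)

lemma walsh_mul_self : walsh ι * walsh ι = (2 ^ Fintype.card ι : ℤ) • 1 := by
  ext a b
  have hprod (x : ι → ZMod 2) :
      walsh ι a x * walsh ι x b = ∏ i, signChar ((a i + b i) * x i) := by
    simp only [walsh, of_apply, ← prod_mul_distrib, add_mul, signChar_add, mul_comm (x _) (b _)]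
  simp_rw [mul_apply, hprod, ← Fintype.prod_sum (fun i t => signChar ((a i + b i) * t)),
    sum_signChar_mul, Matrix.smul_apply, one_apply]
  by_cases hab : a = b
  · simp [hab, CharTwo.add_self_eq_zero]
  · obtain ⟨i, hi⟩ := Function.ne_iff.mp hab
    rw [prod_eq_zero (mem_univ i) (if_neg (CharTwo.add_eq_zero.not.mpr hi)), if_neg hab, smul_zero]

lemma det_walsh_ne_zero : (walsh ι).det ≠ 0 := by
  have h := congrArg det (walsh_mul_self (ι := ι))
  rw [det_mul, det_smul, det_one, mul_one] at h
  intro h0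
  rw [h0, mul_zero] at h
  exact (pow_ne_zero _ (pow_ne_zero _ two_ne_zero)) h.symm

def cubeShift (i : ι) : Matrix (ι → ZMod 2) (ι → ZMod 2) ℤ :=
  of fun x b => if x = b + Pi.single i 1 then 1 else 0

lemma walsh_mul_cubeShift (i : ι) :
    walsh ι * cubeShift i = diagonal (fun a => signChar (a i)) * walsh ι := by
  ext a b
  rw [mul_apply, diagonal_mul]
  simp only [cubeShift, of_apply, mul_ite, mul_one, mul_zero, sum_ite_eq', mem_univ, if_true]
  have hsingle : ∏ j, signChar (a j * (Pi.single i 1 : ι → ZMod 2) j) = signChar (a i) := by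
    rw [prod_eq_single i (fun j _ hj => by rw [Pi.single_eq_of_ne hj, mul_zero]; rfl) (by simp),
      Pi.single_eq_same, mul_one]
  simp only [walsh, of_apply, Pi.add_apply, mul_add, signChar_add, prod_mul_distrib, hsingle,
    mul_comm]

end Cube

section Hypercube

variable {d : ℕ}

lemma cubeLap_eq_smul_one_sub_sum_cubeShift : cubeLap d = (d : ℤ) • 1 - ∑ i, cubeShift i := by
  ext x b
  simp only [Matrix.sub_apply, Matrix.smul_apply, one_apply, Matrix.sum_apply, cubeShift, of_apply,
    eq_add_single_one_iff, sum_ite_eq_singleton, cubeLap]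
  by_cases hxb : x = b
  · simp [hxb]
  · simp [hxb, apply_ite (-· : ℤ → ℤ)]

lemma walsh_mul_cubeLap_add_smul_one (c : ℤ) :
    walsh (Fin d) * (cubeLap d + c • 1) =
      diagonal (fun a => c + 2 * hammingNorm a) * walsh (Fin d) := by
  have hdiag :
      ((d : ℤ) + c) • 1 - ∑ i, diagonal (fun a : Fin d → ZMod 2 => signChar (a i)) =
        diagonal (fun a => c + 2 * hammingNorm a) := by
    ext a b
    simp only [Matrix.sub_apply, Matrix.smul_apply, Matrix.sum_apply, one_apply, diagonal_apply]
    by_cases hab : a = b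
    · simp only [hab, if_true, smul_eq_mul, mul_one, sum_signChar, Fintype.card_fin]
      ring
    · simp [hab]
  rw [cubeLap_eq_smul_one_sub_sum_cubeShift, ← hdiag, mul_add, mul_sub, mul_sum, sub_mul, sum_mul]
  simp only [walsh_mul_cubeShift, Matrix.add_mul, Matrix.mul_smul, Matrix.smul_mul, Matrix.mul_one,
    Matrix.one_mul, add_smul]
  abel

lemma det_cubeLap_add_smul_one (c : ℤ) :
    (cubeLap d + c • 1).det = ∏ a : Fin d → ZMod 2, (c + 2 * hammingNorm a) := by
  have h := congrArg det (walsh_mul_cubeLap_add_smul_one (d := d) c)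
  rw [det_mul, det_mul, det_diagonal, mul_comm] at h
  exact mul_right_cancel₀ det_walsh_ne_zero h

end Hypercube

theorem stmt3_general (k d : ℕ) :
    Nat.card
        (((Fin d → ZMod 2) → ℤ) ⧸
          LinearMap.range (Matrix.toLin' (cubeLap d + ((2 * k + 1 : ℤ)) • 1)ᵀ)) =
      ∏ i ∈ Finset.range (d + 1), (2 * i + 2 * k + 1) ^ d.choose i := by
  have hdet : (cubeLap d + ((2 * k + 1 : ℤ)) • 1)ᵀ.det =
      ((∏ i ∈ range (d + 1), (2 * i + 2 * k + 1) ^ d.choose i : ℕ) : ℤ) := by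
    rw [det_transpose, det_cubeLap_add_smul_one,
      prod_hammingNorm fun m => (2 * k + 1 : ℤ) + 2 * m, Fintype.card_fin]
    push_cast
    exact prod_congr rfl fun i _ => by ring
  have hpos : 0 < ∏ i ∈ range (d + 1), (2 * i + 2 * k + 1) ^ d.choose i :=
    prod_pos fun i _ => pow_pos (by omega) _
  rw [natCard_quotient_range_toLin' _ (by rw [hdet]; exact_mod_cast hpos.ne'), hdet,
    Int.natAbs_natCast]

/-- The order of the sandpile group of the `(2k+1)`-cone of the hypercube `Q_d`
(the cokernel of the transpose of the reduced Laplacian `L(Q_d) + (2k+1)·I`)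
equals `∏_{i=0}^{d} (2i + 2k + 1)^{binom(d,i)}`. -/
theorem stmt3 (k d : ℕ) (hd : 1 ≤ d) :
    Nat.card
        (((Fin d → ZMod 2) → ℤ) ⧸
          LinearMap.range (Matrix.toLin' (cubeLap d + ((2 * k + 1 : ℤ)) • 1)ᵀ)) =
      ∏ i ∈ Finset.range (d + 1), (2 * i + 2 * k + 1) ^ d.choose i :=
  stmt3_general k d
end

section
/- For natural numbers k ≥ 0 and d ≥ 1, the sandpile group of the (2k+1)-cone of the hypercube Q_d is isomorphic to the direct sum ⊕_{i=0}^{d} (ℤ/(2i+2k+1)ℤ)^{binom(d,i)}. -/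
open Matrix

open Finset

variable {d : ℕ}

/-- character -/
def chi (S a : Fin d → ZMod 2) : ℤ := ∏ i, (-1 : ℤ) ^ (S i * a i).val

def wt (S : Fin d → ZMod 2) : ℕ := ∑ i, (S i).val

lemma chi_comm (S a : Fin d → ZMod 2) : chi S a = chi a S := by
  unfold chi; exact Finset.prod_congr rfl fun i _ => by rw [mul_comm]

lemma chi_add_left (S T a : Fin d → ZMod 2) : chi (S + T) a = chi S a * chi T a := by
  unfold chi
  rw [← Finset.prod_mul_distrib]
  refine Finset.prod_congr rfl fun i _ => ?_
  have : ∀ x y z : ZMod 2, (-1:ℤ) ^ ((x + y) * z).val = (-1:ℤ)^((x*z).val) * (-1:ℤ)^((y*z).val) := by decide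
  exact this _ _ _

lemma chi_add_right (S a b : Fin d → ZMod 2) : chi S (a + b) = chi S a * chi S b := by
  rw [chi_comm, chi_add_left, chi_comm a, chi_comm b]

lemma chi_zero_left (a : Fin d → ZMod 2) : chi (0 : Fin d → ZMod 2) a = 1 := by
  unfold chi
  refine Finset.prod_eq_one fun i _ => ?_
  have : ∀ z : ZMod 2, (-1:ℤ) ^ ((0 : ZMod 2) * z).val = 1 := by decide
  exact this _

lemma sum_chi (S : Fin d → ZMod 2) :
    ∑ a : Fin d → ZMod 2, chi S a = if S = 0 then 2 ^ d else 0 := by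
  split_ifs with h
  · subst h
    simp only [chi_zero_left, Finset.sum_const, Finset.card_univ, nsmul_eq_mul, mul_one]
    rw [Fintype.card_fun]
    simp
  · obtain ⟨i0, hi0⟩ : ∃ i0, S i0 ≠ 0 := by
      by_contra hc
      push_neg at hc
      exact h (funext hc)
    set e : Fin d → ZMod 2 := fun j => if j = i0 then 1 else 0 with he
    have hse : chi S e = -1 := by
      unfold chi
      rw [Finset.prod_eq_single i0]
      · have h1 : S i0 = 1 := by
          have : ∀ x : ZMod 2, x ≠ 0 → x = 1 := by decide
          exact this _ hi0
        simp [he, h1]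
        decide
      · intro b _ hb
        simp [he, hb]
      · simp
    have key : ∑ a : Fin d → ZMod 2, chi S a = ∑ a : Fin d → ZMod 2, chi S (a + e) :=
      (Fintype.sum_equiv (Equiv.addRight e) _ _ (fun a => rfl)).symm
    have : ∑ a : Fin d → ZMod 2, chi S a = -∑ a : Fin d → ZMod 2, chi S a := by
      nth_rewrite 1 [key]
      simp [chi_add_right, hse]
    omega

/-- The character matrix. -/
def Hm (d : ℕ) : Matrix (Fin d → ZMod 2) (Fin d → ZMod 2) ℤ := fun S a => chi S a

lemma Hm_mul_Hm : Hm d * Hm d = (2 ^ d : ℤ) • 1 := by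
  ext S T
  simp only [Matrix.mul_apply, Hm, Matrix.smul_apply, Matrix.one_apply, smul_eq_mul]
  have h1 : ∀ b, chi S b * chi b T = chi (S + T) b := fun b => by
    rw [chi_comm b T]; exact (chi_add_left S T b).symm
  rw [Finset.sum_congr rfl fun b _ => h1 b, sum_chi]
  have h2 : S + T = 0 ↔ S = T := by
    constructor
    · intro h
      funext j
      have := congrFun h j
      revert this
      have : ∀ x y : ZMod 2, x + y = 0 → x = y := by decide
      exact this _ _
    · rintro rfl
      funext j
      have : ∀ x : ZMod 2, x + x = 0 := by decide
      exact this _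
  simp only [h2]
  split_ifs <;> simp

lemma Hm_symm : (Hm d)ᵀ = Hm d := by
  ext a b; exact (chi_comm b a)

lemma sum_le_wt (S : Fin d → ZMod 2) : wt S ≤ d := by
  unfold wt
  calc ∑ i, (S i).val ≤ ∑ _i : Fin d, 1 := Finset.sum_le_sum fun i _ => by
        have : ∀ x : ZMod 2, x.val ≤ 1 := by decide
        exact this _
    _ = d := by simp

def flp (a : Fin d → ZMod 2) (i : Fin d) : Fin d → ZMod 2 :=
  Function.update a i (a i + 1)

lemma flp_ne (a : Fin d → ZMod 2) (i : Fin d) : flp a i ≠ a := by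
  intro h
  have := congrFun h i
  simp only [flp, Function.update_self] at this
  revert this
  have : ∀ x : ZMod 2, x + 1 ≠ x := by decide
  exact this _

lemma flp_inj (a : Fin d → ZMod 2) {i j : Fin d} (h : flp a i = flp a j) : i = j := by
  by_contra hij
  have := congrFun h i
  simp only [flp, Function.update_self, Function.update_of_ne hij] at this
  revert this
  have : ∀ x : ZMod 2, x + 1 ≠ x := by decide
  exact fun hh => this _ hh

lemma filter_flp (a : Fin d → ZMod 2) (i : Fin d) :
    (Finset.univ.filter fun j => flp a i j ≠ a j) = {i} := by
  ext j
  simp only [Finset.mem_filter, Finset.mem_univ, true_and, Finset.mem_singleton]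
  constructor
  · intro h
    by_contra hj
    exact h (by simp [flp, Function.update_of_ne hj])
  · rintro rfl
    simp only [flp, Function.update_self]
    have : ∀ x : ZMod 2, x + 1 ≠ x := by decide
    exact this _

lemma dist_one_iff (a b : Fin d → ZMod 2) :
    (Finset.univ.filter fun i => b i ≠ a i).card = 1 ↔ ∃ i, b = flp a i := by
  constructor
  · intro h
    obtain ⟨i0, hi0⟩ := Finset.card_eq_one.mp h
    refine ⟨i0, funext fun j => ?_⟩
    by_cases hj : j = i0
    · subst hj
      have hjmem : j ∈ (Finset.univ.filter fun i => b i ≠ a i) := by rw [hi0]; simp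
      simp only [Finset.mem_filter] at hjmem
      have h2 : ∀ x y : ZMod 2, x ≠ y → x = y + 1 := by decide
      simp only [flp, Function.update_self]
      exact h2 _ _ hjmem.2
    · have hjn : j ∉ (Finset.univ.filter fun i => b i ≠ a i) := by rw [hi0]; simp [hj]
      simp only [Finset.mem_filter, Finset.mem_univ, true_and, not_not] at hjn
      simp [flp, Function.update_of_ne hj, hjn]
  · rintro ⟨i, rfl⟩
    rw [filter_flp]
    simp

lemma chi_flp (S a : Fin d → ZMod 2) (i : Fin d) :
    chi S (flp a i) = (-1 : ℤ) ^ (S i).val * chi S a := by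
  unfold chi flp
  rw [← Finset.mul_prod_erase Finset.univ
        (fun j => (-1:ℤ) ^ (S j * Function.update a i (a i + 1) j).val) (Finset.mem_univ i),
      ← Finset.mul_prod_erase Finset.univ
        (fun j => (-1:ℤ) ^ (S j * a j).val) (Finset.mem_univ i)]
  simp only [Function.update_self, ← mul_assoc]
  have h1 : (-1:ℤ) ^ (S i * (a i + 1)).val = (-1:ℤ) ^ (S i).val * (-1:ℤ) ^ (S i * a i).val := by
    have : ∀ x y : ZMod 2, (-1:ℤ) ^ (x * (y + 1)).val = (-1:ℤ) ^ x.val * (-1:ℤ) ^ (x*y).val := by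
      decide
    exact this _ _
  rw [h1]
  congr 1
  refine Finset.prod_congr rfl fun j hj => ?_
  rw [Function.update_of_ne (Finset.mem_erase.mp hj).1]

variable {k : ℕ}

def mM (d k : ℕ) : Matrix (Fin d → ZMod 2) (Fin d → ZMod 2) ℤ :=
  cubeLap d + ((2 * k + 1 : ℤ)) • 1

def lamZ (k : ℕ) (S : Fin d → ZMod 2) : ℤ := 2 * wt S + 2 * k + 1

def Dm (d k : ℕ) : Matrix (Fin d → ZMod 2) (Fin d → ZMod 2) ℤ :=
  Matrix.diagonal (lamZ k)

lemma mM_entry (b a : Fin d → ZMod 2) :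
    mM d k b a = (if b = a then (d : ℤ) + (2 * k + 1) else 0)
      - ∑ i, (if b = flp a i then (1:ℤ) else 0) := by
  simp only [mM, cubeLap, Matrix.add_apply, Matrix.smul_apply, Matrix.one_apply, smul_eq_mul]
  by_cases hba : b = a
  · subst hba
    have : ∀ i, (if b = flp b i then (1:ℤ) else 0) = 0 := fun i => by
      simp [(flp_ne b i).symm, Ne.symm]
    simp [this, Finset.sum_const_zero]
  · simp only [hba, if_false, if_neg hba, mul_zero, add_zero, zero_sub]
    by_cases hdist : (Finset.univ.filter fun i => b i ≠ a i).card = 1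
    · rw [if_pos hdist]
      obtain ⟨i0, rfl⟩ := (dist_one_iff a b).mp hdist
      rw [Finset.sum_eq_single i0]
      · simp
      · intro j _ hj
        rw [if_neg]
        intro hf
        exact hj (flp_inj a hf.symm)
      · simp
    · rw [if_neg hdist]
      have : ∀ i, (if b = flp a i then (1:ℤ) else 0) = 0 := fun i => by
        rw [if_neg]
        intro hf
        exact hdist ((dist_one_iff a b).mpr ⟨i, hf⟩)
      simp [this]

lemma sum_neg_one_pow (S : Fin d → ZMod 2) :
    ∑ i, (-1 : ℤ) ^ (S i).val = (d : ℤ) - 2 * wt S := by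
  have h1 : ∀ i, (-1 : ℤ) ^ (S i).val = 1 - 2 * ((S i).val : ℤ) := fun i => by
    have : ∀ x : ZMod 2, (-1:ℤ) ^ x.val = 1 - 2 * (x.val : ℤ) := by decide
    exact this _
  rw [Finset.sum_congr rfl fun i _ => h1 i, Finset.sum_sub_distrib, ← Finset.mul_sum]
  simp only [Finset.sum_const, Finset.card_univ, Fintype.card_fin, nsmul_eq_mul, mul_one, wt]
  push_cast
  ring

lemma Hm_mul_mM : Hm d * mM d k = Dm d k * Hm d := by
  ext S a
  rw [Matrix.mul_apply]
  have hD : (Dm d k * Hm d) S a = lamZ k S * chi S a := by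
    simp [Dm, Matrix.diagonal_mul, Hm]
  rw [hD]
  calc ∑ b, Hm d S b * mM d k b a
      = ∑ b, (chi S b * (if b = a then (d : ℤ) + (2 * k + 1) else 0)
          - ∑ i, chi S b * (if b = flp a i then (1:ℤ) else 0)) := by
        refine Finset.sum_congr rfl fun b _ => ?_
        rw [Hm, mM_entry, mul_sub, Finset.mul_sum]
    _ = (∑ b, chi S b * (if b = a then (d : ℤ) + (2 * k + 1) else 0))
          - ∑ b, ∑ i, chi S b * (if b = flp a i then (1:ℤ) else 0) := by
        rw [Finset.sum_sub_distrib]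
    _ = chi S a * ((d : ℤ) + (2 * k + 1)) - ∑ i, chi S (flp a i) := by
        congr 1
        · simp only [mul_ite, mul_zero, Finset.sum_ite_eq', Finset.mem_univ, if_true]
        · rw [Finset.sum_comm]
          refine Finset.sum_congr rfl fun i _ => ?_
          simp only [mul_ite, mul_zero, mul_one, Finset.sum_ite_eq', Finset.mem_univ, if_true]
    _ = lamZ k S * chi S a := by
        have : ∀ i, chi S (flp a i) = (-1:ℤ) ^ (S i).val * chi S a := chi_flp S a
        rw [Finset.sum_congr rfl fun i _ => this i, ← Finset.sum_mul, sum_neg_one_pow]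
        unfold lamZ
        push_cast
        ring

lemma cubeLap_symm : (cubeLap d)ᵀ = cubeLap d := by
  ext a b
  simp only [Matrix.transpose_apply, cubeLap]
  congr 1
  · exact propext ⟨fun h => h.symm, fun h => h.symm⟩
  · have hfe : (Finset.univ.filter fun i => b i ≠ a i) = (Finset.univ.filter fun i => a i ≠ b i) :=
      Finset.filter_congr fun i _ => ne_comm
    rw [hfe]

lemma mM_symm : (mM d k)ᵀ = mM d k := by
  unfold mM
  rw [Matrix.transpose_add, cubeLap_symm, Matrix.transpose_smul, Matrix.transpose_one]

lemma mM_mul_Hm : mM d k * Hm d = Hm d * Dm d k := by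
  have h := congrArg Matrix.transpose (Hm_mul_mM (d := d) (k := k))
  rw [Matrix.transpose_mul, Matrix.transpose_mul, Hm_symm, mM_symm] at h
  rw [h]
  congr 1
  simp [Dm, Matrix.diagonal_transpose]

lemma det_Hm_sq : det (Hm d) * det (Hm d) = (2 ^ d : ℤ) ^ (2 ^ d) := by
  rw [← Matrix.det_mul, Hm_mul_Hm, Matrix.det_smul, Matrix.det_one, mul_one]
  congr 1
  rw [Fintype.card_fun]
  simp

lemma det_Hm_ne_zero : det (Hm d) ≠ 0 := by
  intro h
  have := det_Hm_sq (d := d)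
  rw [h, mul_zero] at this
  have h2 : ((2:ℤ) ^ d) ^ (2 ^ d) ≠ 0 := by positivity
  exact h2 this.symm

lemma lamZ_pos (S : Fin d → ZMod 2) : 0 < lamZ k S := by
  unfold lamZ; positivity

lemma det_mM_odd : Odd (det (mM d k)) := by
  have h : det (mM d k) * det (Hm d) = det (Dm d k) * det (Hm d) := by
    rw [← Matrix.det_mul, mM_mul_Hm, Matrix.det_mul, mul_comm]
  have hdet : det (mM d k) = det (Dm d k) := mul_right_cancel₀ det_Hm_ne_zero h
  rw [hdet, Dm, Matrix.det_diagonal]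
  refine Finset.prod_induction _ Odd (fun a b ha hb => ha.mul hb) odd_one fun S _ => ?_
  exact ⟨(wt S : ℤ) + k, by unfold lamZ; push_cast; ring⟩

def mN (k : ℕ) (S : Fin d → ZMod 2) : ℕ := 2 * wt S + 2 * k + 1

instance mN_neZero (S : Fin d → ZMod 2) : NeZero (mN k S) := ⟨by unfold mN; omega⟩

lemma lamZ_eq_cast (S : Fin d → ZMod 2) : lamZ k S = (mN k S : ℤ) := by
  unfold lamZ mN; push_cast; ring

/-- the linear map to the product of cyclic groups -/
def phi (d k : ℕ) : ((Fin d → ZMod 2) → ℤ) →ₗ[ℤ] (∀ S : Fin d → ZMod 2, ZMod (mN k S)) where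
  toFun f := fun S => (((Hm d).mulVec f S : ℤ) : ZMod (mN k S))
  map_add' f g := by
    funext S
    simp [Matrix.mulVec_add]
  map_smul' z f := by
    funext S
    show (((Hm d).mulVec (z • f) S : ℤ) : ZMod (mN k S)) = _
    rw [Matrix.mulVec_smul]
    simp [zsmul_eq_mul]

lemma phi_surjective : Function.Surjective (phi d k) := by
  intro c
  -- choose v with (v S : ZMod (mN k S)) = (2^d)⁻¹ * c S
  set v : (Fin d → ZMod 2) → ℤ := fun S => (((2 ^ d : ZMod (mN k S))⁻¹ * c S).val : ℤ)
  refine ⟨(Hm d).mulVec v, ?_⟩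
  funext S
  have hmul : (Hm d).mulVec ((Hm d).mulVec v) = ((2:ℤ)^d) • v := by
    rw [Matrix.mulVec_mulVec, Hm_mul_Hm, Matrix.smul_mulVec, Matrix.one_mulVec]
  have hunit : IsUnit ((2 : ZMod (mN k S)) ^ d) := by
    refine IsUnit.pow d ?_
    have h2 : ((2 : ℕ) : ZMod (mN k S)) = (2 : ZMod (mN k S)) := by push_cast; rfl
    rw [← h2, ZMod.isUnit_iff_coprime]
    exact Nat.coprime_two_left.mpr ⟨wt S + k, by unfold mN; ring⟩
  show (((Hm d).mulVec ((Hm d).mulVec v) S : ℤ) : ZMod (mN k S)) = c S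
  rw [hmul]
  have hv : ((((2:ℤ)^d • v) S : ℤ) : ZMod (mN k S))
      = (2 : ZMod (mN k S)) ^ d * ((2 ^ d : ZMod (mN k S))⁻¹ * c S) := by
    simp only [Pi.smul_apply, smul_eq_mul, Int.cast_mul, v]
    push_cast
    rw [ZMod.natCast_val, ZMod.cast_id]
  rw [hv, ← mul_assoc, ZMod.mul_inv_of_unit _ hunit, one_mul]

lemma range_eq_ker :
    LinearMap.range (Matrix.toLin' (mM d k)ᵀ) = LinearMap.ker (phi d k) := by
  apply le_antisymm
  · rintro _ ⟨g, rfl⟩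
    rw [LinearMap.mem_ker]
    funext S
    show ((((Hm d).mulVec ((Matrix.toLin' (mM d k)ᵀ) g)) S : ℤ) : ZMod (mN k S)) = 0
    rw [Matrix.toLin'_apply, mM_symm, Matrix.mulVec_mulVec, Hm_mul_mM, ← Matrix.mulVec_mulVec]
    have hDv : (Dm d k).mulVec ((Hm d).mulVec g) S = lamZ k S * (Hm d).mulVec g S := by
      simp [Dm, Matrix.mulVec, dotProduct, Matrix.diagonal_apply, Finset.sum_ite_eq,
        Finset.mem_univ]
    rw [hDv, lamZ_eq_cast]
    push_cast
    simp
  · intro f hf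
    rw [LinearMap.mem_ker] at hf
    -- divisibility
    have hdvd : ∀ S, (mN k S : ℤ) ∣ (Hm d).mulVec f S := fun S => by
      have := congrFun hf S
      exact (ZMod.intCast_zmod_eq_zero_iff_dvd _ _).mp this
    obtain ⟨t, ht⟩ : ∃ t : (Fin d → ZMod 2) → ℤ, ∀ S, lamZ k S * t S = (Hm d).mulVec f S := by
      refine ⟨fun S => (Hm d).mulVec f S / lamZ k S, fun S => ?_⟩
      rw [Int.mul_ediv_cancel' (by rw [lamZ_eq_cast]; exact hdvd S)]
    have hDt : (Dm d k).mulVec t = (Hm d).mulVec f := by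
      funext S
      simp only [Dm, Matrix.mulVec, dotProduct, Matrix.diagonal_apply, ite_mul, zero_mul,
        Finset.sum_ite_eq, Finset.mem_univ, if_true]
      exact ht S
    have key : (mM d k).mulVec ((Hm d).mulVec t) = (2 ^ d : ℤ) • f := by
      rw [Matrix.mulVec_mulVec, mM_mul_Hm, ← Matrix.mulVec_mulVec, hDt,
        Matrix.mulVec_mulVec, Hm_mul_Hm, Matrix.smul_mulVec, Matrix.one_mulVec]
    -- apply adjugate
    have key2 : det (mM d k) • ((Hm d).mulVec t) = (2 ^ d : ℤ) • ((mM d k).adjugate.mulVec f) := by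
      have h1 := congrArg ((mM d k).adjugate.mulVec) key
      rw [Matrix.mulVec_mulVec, Matrix.adjugate_mul, Matrix.smul_mulVec, Matrix.one_mulVec,
        Matrix.mulVec_smul] at h1
      exact h1
    have hcop : IsCoprime ((2:ℤ) ^ d) (det (mM d k)) := by
      obtain ⟨c, hc⟩ := det_mM_odd (d := d) (k := k)
      refine IsCoprime.pow_left ?_
      exact ⟨-c, 1, by rw [hc]; ring⟩
    obtain ⟨g, hg⟩ : ∃ g : (Fin d → ZMod 2) → ℤ, (Hm d).mulVec t = (2 ^ d : ℤ) • g := by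
      refine ⟨fun a => (Hm d).mulVec t a / 2 ^ d, funext fun a => ?_⟩
      have hdvd2 : (2:ℤ) ^ d ∣ (Hm d).mulVec t a := by
        refine hcop.dvd_of_dvd_mul_left ?_
        refine ⟨(mM d k).adjugate.mulVec f a, ?_⟩
        have := congrFun key2 a
        simpa [mul_comm] using this
      simp only [Pi.smul_apply, smul_eq_mul]
      rw [Int.mul_ediv_cancel' hdvd2]
    refine ⟨g, ?_⟩
    rw [Matrix.toLin'_apply, mM_symm]
    have h2 : (2 ^ d : ℤ) • (mM d k).mulVec g = (2 ^ d : ℤ) • f := by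
      rw [← Matrix.mulVec_smul, ← hg, key]
    funext a
    have := congrFun h2 a
    simp only [Pi.smul_apply, smul_eq_mul] at this
    exact mul_left_cancel₀ (by positivity) this

def fw (d : ℕ) : (Fin d → ZMod 2) → Fin (d + 1) :=
  fun S => ⟨wt S, Nat.lt_succ_of_le (sum_le_wt S)⟩

def toFinsetEquiv (d : ℕ) : (Fin d → ZMod 2) ≃ Finset (Fin d) where
  toFun S := Finset.univ.filter fun j => S j = 1
  invFun s := fun j => if j ∈ s then 1 else 0
  left_inv S := by
    funext j
    by_cases h : S j = 1
    · simp [h]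
    · have h0 : S j = 0 := by
        have : ∀ x : ZMod 2, x ≠ 1 → x = 0 := by decide
        exact this _ h
      simp [h, h0]
  right_inv s := by
    ext j
    by_cases h : j ∈ s <;> simp [h]

lemma wt_eq_card (S : Fin d → ZMod 2) : wt S = (toFinsetEquiv d S).card := by
  unfold wt toFinsetEquiv
  simp only [Equiv.coe_fn_mk, Finset.card_filter]
  refine Finset.sum_congr rfl fun j _ => ?_
  have : ∀ x : ZMod 2, x.val = if x = 1 then 1 else 0 := by decide
  exact this _

lemma card_fiber (i : Fin (d + 1)) :
    Fintype.card {S : Fin d → ZMod 2 // fw d S = i} = d.choose i := by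
  have e1 : {S : Fin d → ZMod 2 // fw d S = i} ≃ {s : Finset (Fin d) // s.card = (i : ℕ)} := by
    refine (toFinsetEquiv d).subtypeEquiv fun S => ?_
    rw [show (fw d S = i) ↔ (wt S = (i : ℕ)) from ⟨fun h => congrArg Fin.val h, fun h => Fin.ext h⟩]
    rw [wt_eq_card]
  rw [Fintype.card_congr e1, Fintype.card_finset_len, Fintype.card_fin]

noncomputable def bigEquiv (d : ℕ) :
    (Σ i : Fin (d + 1), Fin (d.choose i)) ≃ (Fin d → ZMod 2) :=
  (Equiv.sigmaCongrRight fun i => (Fintype.equivFinOfCardEq (card_fiber i)).symm).trans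
    (Equiv.sigmaFiberEquiv (fw d))

lemma bigEquiv_fst (p : Σ i : Fin (d + 1), Fin (d.choose i)) :
    wt (bigEquiv d p) = (p.1 : ℕ) := by
  obtain ⟨i, j⟩ := p
  have h : fw d (bigEquiv d ⟨i, j⟩) = i := ((Fintype.equivFinOfCardEq (card_fiber i)).symm j).2
  exact congrArg Fin.val h

def zmodCongr {n m : ℕ} (h : n = m) : ZMod n ≃+ ZMod m := by subst h; exact AddEquiv.refl _

def sigmaCurryAddEquiv {ι : Type*} {γ : ι → Type*} {A : ι → Type*}
    [∀ i, AddCommGroup (A i)] :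
    ((p : Σ i, γ i) → A p.1) ≃+ ((i : ι) → γ i → A i) where
  toFun F i j := F ⟨i, j⟩
  invFun G p := G p.1 p.2
  left_inv F := funext fun p => by cases p; rfl
  right_inv G := rfl
  map_add' _ _ := rfl


/-- The sandpile group of the `(2k+1)`-cone of the hypercube `Q_d`
(the cokernel of the transpose of the reduced Laplacian `L(Q_d) + (2k+1)·I`)
is isomorphic to `⊕_{i=0}^{d} (ℤ/(2i+2k+1)ℤ)^{binom(d,i)}`. -/
theorem stmt4 (k d : ℕ) (hd : 1 ≤ d) :
    Nonempty
      ((((Fin d → ZMod 2) → ℤ) ⧸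
          LinearMap.range (Matrix.toLin' (cubeLap d + ((2 * k + 1 : ℤ)) • 1)ᵀ))
        ≃+ ((i : Fin (d + 1)) → Fin (d.choose i) → ZMod (2 * (i : ℕ) + 2 * k + 1))) := by
  have e1 := (Submodule.quotEquivOfEq _ _ (range_eq_ker (d := d) (k := k))).toAddEquiv
  have e2 := (LinearMap.quotKerEquivOfSurjective (phi d k) phi_surjective).toAddEquiv
  have e3 := ((RingEquiv.piCongrLeft (fun S => ZMod (mN k S)) (bigEquiv d)).symm).toAddEquiv
  have e4 := AddEquiv.piCongrRight (fun p : Σ i : Fin (d+1), Fin (d.choose i) =>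
    zmodCongr (show mN k (bigEquiv d p) = 2 * (p.1 : ℕ) + 2 * k + 1 by
      unfold mN; rw [bigEquiv_fst]))
  have e5 := sigmaCurryAddEquiv (ι := Fin (d+1)) (γ := fun i => Fin (d.choose i))
    (A := fun i => ZMod (2 * (i : ℕ) + 2 * k + 1))
  exact ⟨e1.trans (e2.trans (e3.trans (e4.trans e5)))⟩
end

section
/- The sandpile group of the 2-cone of Q₂ (the 4-cycle with a sink joined by 2 parallel edges to each vertex) is isomorphic to ℤ/8 ⊕ ℤ/8 ⊕ ℤ/3, and in particular is not isomorphic to ℤ/2 ⊕ ℤ/4 ⊕ ℤ/4 ⊕ ℤ/6. -/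
open Matrix

set_option maxRecDepth 8000

private def sandℓ : (Fin 4 → ℤ) →ₗ[ℤ] ZMod 8 × ZMod 8 × ZMod 3 where
  toFun x := (((-4 * x 0 - x 1 + x 3 : ℤ) : ZMod 8),
              ((7 * x 0 + 2 * x 1 + x 2 + 2 * x 3 : ℤ) : ZMod 8),
              ((7 * x 0 + 2 * x 1 + x 2 + 2 * x 3 : ℤ) : ZMod 3))
  map_add' x y := by
    refine Prod.ext ?_ (Prod.ext ?_ ?_) <;> simp [Pi.add_apply] <;> ring
  map_smul' c x := by
    refine Prod.ext ?_ (Prod.ext ?_ ?_) <;>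
      simp [Pi.smul_apply, smul_eq_mul, zsmul_eq_mul] <;> ring

/-- The sandpile group of the 2-cone of `Q₂` (reduced Laplacian: diagonal 4 and
`-1` along the 4-cycle adjacencies) is `ℤ/8 ⊕ ℤ/8 ⊕ ℤ/3`, and in particular it
is not `ℤ/2 ⊕ ℤ/4 ⊕ ℤ/4 ⊕ ℤ/6`. -/
theorem stmt13 :
    let M : Matrix (Fin 4) (Fin 4) ℤ :=
      !![4, -1, 0, -1; -1, 4, -1, 0; 0, -1, 4, -1; -1, 0, -1, 4]
    Nonempty (((Fin 4 → ℤ) ⧸ LinearMap.range (Matrix.toLin' Mᵀ)) ≃+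
        (ZMod 8 × ZMod 8 × ZMod 3)) ∧
      ¬ Nonempty (((Fin 4 → ℤ) ⧸ LinearMap.range (Matrix.toLin' Mᵀ)) ≃+
        (ZMod 2 × ZMod 4 × ZMod 4 × ZMod 6)) := by
  intro M
  -- range ≤ ker
  have h_le : LinearMap.range (Matrix.toLin' Mᵀ) ≤ LinearMap.ker sandℓ := by
    rintro y ⟨c, rfl⟩
    have hy : ∀ i, (Matrix.toLin' Mᵀ) c i = Mᵀ.mulVec c i := fun i => rfl
    have hy : (Matrix.toLin' Mᵀ) c = Mᵀ.mulVec c := rfl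
    simp only [LinearMap.mem_ker, sandℓ, LinearMap.coe_mk, AddHom.coe_mk, hy, M,
      Matrix.mulVec, dotProduct, Fin.sum_univ_four]
    refine Prod.ext ?_ (Prod.ext ?_ ?_) <;>
    · simp only [Matrix.transpose_apply, Matrix.cons_val', Matrix.cons_val_zero,
        Matrix.cons_val_one, Matrix.head_cons, Matrix.empty_val',
        Matrix.cons_val_fin_one, Matrix.head_fin_const, Matrix.cons_val_two,
        Matrix.tail_cons, Matrix.cons_val_three, Matrix.of_apply, Prod.fst_zero,
        Prod.snd_zero]
      rw [ZMod.intCast_zmod_eq_zero_iff_dvd]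
      omega
  -- kernel ≤ range
  have h_ker : LinearMap.ker sandℓ ≤ LinearMap.range (Matrix.toLin' Mᵀ) := by
    intro x hx
    simp only [LinearMap.mem_ker, sandℓ, LinearMap.coe_mk, AddHom.coe_mk,
      Prod.mk_eq_zero] at hx
    obtain ⟨h8, h8', h3⟩ := hx
    rw [ZMod.intCast_zmod_eq_zero_iff_dvd] at h8 h8' h3
    obtain ⟨a, ha⟩ := h8
    have h24 : (24 : ℤ) ∣ 7 * x 0 + 2 * x 1 + x 2 + 2 * x 3 := by omega
    obtain ⟨b, hb⟩ := h24
    refine ⟨![b, -x 0 - a + 2 * b, -(4 * x 0 + x 1) - 4 * a + 7 * b, a + 2 * b], ?_⟩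
    funext i
    show Mᵀ.mulVec _ i = x i
    fin_cases i <;>
    · simp [M, Matrix.mulVec, dotProduct, Fin.sum_univ_four]
      omega
  -- surjectivity
  have h_surj : Function.Surjective sandℓ := by
    rintro ⟨a, b, c⟩
    obtain ⟨A, rfl⟩ := ZMod.intCast_surjective (n := 8) a
    obtain ⟨B, rfl⟩ := ZMod.intCast_surjective (n := 8) b
    obtain ⟨C, rfl⟩ := ZMod.intCast_surjective (n := 3) c
    refine ⟨![0, 0, -2 * A + (9 * B + 16 * C), A], ?_⟩
    simp only [sandℓ, LinearMap.coe_mk, AddHom.coe_mk]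
    refine Prod.ext ?_ (Prod.ext ?_ ?_) <;>
    · simp only [Matrix.cons_val_zero, Matrix.cons_val_one, Matrix.head_cons,
        Matrix.cons_val_two, Matrix.tail_cons, Matrix.cons_val_three]
      rw [← sub_eq_zero, ← Int.cast_sub, ZMod.intCast_zmod_eq_zero_iff_dvd]
      omega
  -- build the equivalence
  set f := Submodule.liftQ _ sandℓ h_le with hf
  have hinj : Function.Injective f := by
    rw [← LinearMap.ker_eq_bot, Submodule.ker_liftQ_eq_bot _ _ _ h_ker]
  have hsurj : Function.Surjective f := by
    intro z
    obtain ⟨x, hx⟩ := h_surj z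
    exact ⟨Submodule.Quotient.mk x, hx⟩
  have key : Nonempty (((Fin 4 → ℤ) ⧸ LinearMap.range (Matrix.toLin' Mᵀ)) ≃+
      (ZMod 8 × ZMod 8 × ZMod 3)) :=
    ⟨(LinearEquiv.ofBijective f ⟨hinj, hsurj⟩).toAddEquiv⟩
  refine ⟨key, ?_⟩
  rintro ⟨e⟩
  obtain ⟨g⟩ := key
  set E := g.symm.trans e with hE
  have hall : ∀ y : ZMod 2 × ZMod 4 × ZMod 4 × ZMod 6, 12 • y = 0 := by decide
  have h1 : E (12 • ((1 : ZMod 8), (0 : ZMod 8), (0 : ZMod 3))) = 0 := by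
    rw [map_nsmul]; exact hall _
  rw [← map_zero E] at h1
  have := E.injective h1
  exact absurd this (by decide)
end
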